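/- Let T : X → X be a homeomorphism of a compact metric space, μ a T-invariant Borel probability measure, and U a finite Borel cover of X. Define h_μ⁺(S, W) = inf { h_μ(S, R) : R a finite Borel partition refining W }. Then h_μ⁻(T, U) = lim_{n→∞} (1/n) h_μ⁺(Tⁿ, ⋁_{i=0}^{n-1}T⁻ⁱU), and in particular h_μ⁻(T,U) ≤ h_μ⁺(T,U). -/

import Mathlib

open MeasureTheory Set Filter Topology

noncomputable section

/-- `U` is a cover of the whole space. -/
def IsCover {X : Type*} (U : Finset (Set X)) : Prop := ⋃₀ (U : Set (Set X)) = Set.univ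

/-- `R` refines `U`: every element of `R` is contained in some element of `U`. -/
def Refines {X : Type*} (R U : Finset (Set X)) : Prop := ∀ A ∈ R, ∃ B ∈ U, A ⊆ B

/-- `R` is a partition of the whole space. -/
def IsPartition {X : Type*} (R : Finset (Set X)) : Prop :=
  IsCover R ∧ ∀ A ∈ R, ∀ B ∈ R, A ≠ B → Disjoint A B

/-- `R` is a partition into Borel (measurable) sets. -/
def IsBorelPartition {X : Type*} [MeasurableSpace X] (R : Finset (Set X)) : Prop :=
  IsPartition R ∧ ∀ A ∈ R, MeasurableSet A

/-- Join of two finite families of sets: `U ∨ V = {A ∩ B}`. -/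
def coverJoin {X : Type*} (U V : Finset (Set X)) : Finset (Set X) :=
  letI := Classical.decEq (Set X)
  (U ×ˢ V).image fun p => p.1 ∩ p.2

/-- Preimage of a finite family of sets under a map. -/
def coverPre {Y X : Type*} (g : Y → X) (U : Finset (Set X)) : Finset (Set Y) :=
  letI := Classical.decEq (Set Y)
  U.image fun A => g ⁻¹' A

/-- `dynJoin T U n = ⋁_{i=0}^{n-1} T⁻ⁱ U`. -/
def dynJoin {X : Type*} (T : X → X) (U : Finset (Set X)) : ℕ → Finset (Set X)
  | 0 => {Set.univ}
  | n + 1 => coverJoin (dynJoin T U n) (coverPre (T^[n]) U)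

/-- Minimal cardinality of a subcover of `W`. -/
def coverNum {X : Type*} (W : Finset (Set X)) : ℕ :=
  sInf {n | ∃ F : Finset (Set X), F ⊆ W ∧ F.card = n ∧ ⋃₀ (F : Set (Set X)) = Set.univ}

/-- Shannon entropy of a finite family of sets (convention `0 log 0 = 0`). -/
def partEnt {X : Type*} [MeasurableSpace X] (μ : Measure X) (R : Finset (Set X)) : ℝ :=
  -∑ A ∈ R, (μ A).toReal * Real.log (μ A).toReal

/-- Entropy of a cover: infimum of entropies of Borel partitions refining it. -/
def coverEnt {X : Type*} [MeasurableSpace X] (μ : Measure X) (U : Finset (Set X)) : ℝ :=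
  sInf {h | ∃ R : Finset (Set X), IsBorelPartition R ∧ Refines R U ∧ h = partEnt μ R}

end

/-- `h_μ(S, R) = lim (1/m) H_μ(⋁_{j<m} S⁻ʲR)`, which by subadditivity equals the
infimum over `m ≥ 1`. -/
noncomputable def hMuPart {X : Type*} [MeasurableSpace X] (μ : Measure X) (S : X → X)
    (R : Finset (Set X)) : ℝ :=
  ⨅ m : {m : ℕ // 1 ≤ m}, partEnt μ (dynJoin S R m.1) / m.1

/-- `h_μ⁺(S, W) = inf { h_μ(S, R) : R a finite Borel partition refining W }`. -/
noncomputable def hMuPlus {X : Type*} [MeasurableSpace X] (μ : Measure X) (S : X → X)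
    (W : Finset (Set X)) : ℝ :=
  sInf {h | ∃ R : Finset (Set X), IsBorelPartition R ∧ Refines R W ∧ h = hMuPart μ S R}

/-!
A Borel partition `R` refining `U₀ⁿ⁻¹ = ⋁_{i<n} T⁻ⁱU` has `⋁_{j<m} T^{-nj} R` refining `U₀ⁿᵐ⁻¹`,
so `(1/n) h_μ⁺(Tⁿ, U₀ⁿ⁻¹)` lies between `inf_{k ≥ n} (1/k) H_μ(U₀ᵏ⁻¹)` and `(1/n) H_μ(U₀ⁿ⁻¹)`,
and both bounds tend to `h_μ⁻(T, U)`. For the inequality, a partition `R` refining `U` gives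
`H_μ(U₀ᵏ⁻¹) ≤ H_μ(R₀ᵏ⁻¹)`; by invariance of `μ` and subadditivity of the entropy of a join,
`(1/k) H_μ(R₀ᵏ⁻¹)` converges to `h_μ(T, R)` (Fekete), which therefore dominates `h_μ⁻(T, U)`.
-/

section Families

variable {X Y : Type*}

@[simp]
lemma mem_coverJoin {U V : Finset (Set X)} {C : Set X} :
    C ∈ coverJoin U V ↔ ∃ a ∈ U, ∃ b ∈ V, a ∩ b = C := by
  classical
  simp [coverJoin, and_assoc]

@[simp]
lemma mem_coverPre {g : Y → X} {U : Finset (Set X)} {C : Set Y} :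
    C ∈ coverPre g U ↔ ∃ A ∈ U, g ⁻¹' A = C := by
  classical
  simp [coverPre]

lemma coverJoin_univ_right (W : Finset (Set X)) : coverJoin W {univ} = W := by
  ext C
  simp

lemma coverJoin_assoc (A B C : Finset (Set X)) :
    coverJoin (coverJoin A B) C = coverJoin A (coverJoin B C) := by
  ext D
  simp only [mem_coverJoin]
  constructor
  · rintro ⟨_, ⟨a, ha, b, hb, rfl⟩, c, hc, rfl⟩
    exact ⟨a, ha, b ∩ c, ⟨b, hb, c, hc, rfl⟩, (inter_assoc a b c).symm⟩
  · rintro ⟨a, ha, _, ⟨b, hb, c, hc, rfl⟩, rfl⟩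
    exact ⟨a ∩ b, ⟨a, ha, b, hb, rfl⟩, c, hc, inter_assoc a b c⟩

lemma coverPre_coverJoin (g : Y → X) (U V : Finset (Set X)) :
    coverPre g (coverJoin U V) = coverJoin (coverPre g U) (coverPre g V) := by
  ext C
  simp only [mem_coverJoin, mem_coverPre]
  constructor
  · rintro ⟨_, ⟨a, ha, b, hb, rfl⟩, rfl⟩
    exact ⟨_, ⟨a, ha, rfl⟩, _, ⟨b, hb, rfl⟩, preimage_inter.symm⟩
  · rintro ⟨_, ⟨a, ha, rfl⟩, _, ⟨b, hb, rfl⟩, rfl⟩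
    exact ⟨a ∩ b, ⟨a, ha, b, hb, rfl⟩, preimage_inter⟩

lemma coverPre_coverPre (f : Y → X) (g : X → X) (U : Finset (Set X)) :
    coverPre f (coverPre g U) = coverPre (g ∘ f) U := by
  ext C
  simp only [mem_coverPre]
  constructor
  · rintro ⟨_, ⟨B, hB, rfl⟩, rfl⟩
    exact ⟨B, hB, rfl⟩
  · rintro ⟨B, hB, rfl⟩
    exact ⟨_, ⟨B, hB, rfl⟩, rfl⟩

lemma dynJoin_one (T : X → X) (W : Finset (Set X)) : dynJoin T W 1 = W := by
  ext C
  simp [dynJoin]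

lemma dynJoin_add (T : X → X) (W : Finset (Set X)) (a b : ℕ) :
    dynJoin T W (a + b) = coverJoin (dynJoin T W a) (coverPre T^[a] (dynJoin T W b)) := by
  induction b with
  | zero =>
    have : coverPre T^[a] (dynJoin T W 0) = {univ} := by
      ext C
      simp [dynJoin, eq_comm]
    rw [this, add_zero, coverJoin_univ_right]
  | succ b ih =>
    rw [← add_assoc, dynJoin, ih, dynJoin, coverPre_coverJoin, coverPre_coverPre,
      ← Function.iterate_add, add_comm b a, coverJoin_assoc]

lemma dynJoin_iterate_dynJoin (T : X → X) (U : Finset (Set X)) (n m : ℕ) :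
    dynJoin T^[n] (dynJoin T U n) m = dynJoin T U (n * m) := by
  induction m with
  | zero => rfl
  | succ m ih => rw [dynJoin, ih, ← Function.iterate_mul, Nat.mul_succ, dynJoin_add]

end Families

section Refines

variable {X Y : Type*}

lemma refines_refl (A : Finset (Set X)) : Refines A A := fun a ha => ⟨a, ha, subset_rfl⟩

lemma Refines.coverJoin {A B A' B' : Finset (Set X)} (h : Refines A A') (h' : Refines B B') :
    Refines (coverJoin A B) (coverJoin A' B') := by
  intro C hC
  obtain ⟨a, ha, b, hb, rfl⟩ := mem_coverJoin.1 hC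
  obtain ⟨a', ha', haa'⟩ := h a ha
  obtain ⟨b', hb', hbb'⟩ := h' b hb
  exact ⟨a' ∩ b', mem_coverJoin.2 ⟨a', ha', b', hb', rfl⟩, inter_subset_inter haa' hbb'⟩

lemma Refines.coverPre (g : Y → X) {A B : Finset (Set X)} (h : Refines A B) :
    Refines (coverPre g A) (coverPre g B) := by
  intro C hC
  obtain ⟨a, ha, rfl⟩ := mem_coverPre.1 hC
  obtain ⟨b, hb, hab⟩ := h a ha
  exact ⟨g ⁻¹' b, mem_coverPre.2 ⟨b, hb, rfl⟩, preimage_mono hab⟩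

lemma Refines.dynJoin (T : X → X) {R U : Finset (Set X)} (h : Refines R U) (m : ℕ) :
    Refines (dynJoin T R m) (dynJoin T U m) := by
  induction m with
  | zero => exact refines_refl _
  | succ m ih => exact ih.coverJoin (h.coverPre _)

end Refines

section Partitions

variable {X Y : Type*}

lemma IsCover.biUnion_eq_univ {R : Finset (Set X)} (hR : IsCover R) : ⋃ A ∈ R, A = univ := by
  simpa [IsCover, sUnion_eq_biUnion] using hR

lemma IsCover.coverJoin {U V : Finset (Set X)} (hU : IsCover U) (hV : IsCover V) :
    IsCover (coverJoin U V) := by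
  refine eq_univ_of_forall fun x => ?_
  obtain ⟨a, ha, hxa⟩ := hU.symm ▸ mem_univ x
  obtain ⟨b, hb, hxb⟩ := hV.symm ▸ mem_univ x
  exact ⟨a ∩ b, mem_coverJoin.2 ⟨a, ha, b, hb, rfl⟩, hxa, hxb⟩

lemma IsCover.coverPre (g : Y → X) {U : Finset (Set X)} (hU : IsCover U) :
    IsCover (coverPre g U) := by
  refine eq_univ_of_forall fun x => ?_
  obtain ⟨a, ha, hxa⟩ := hU.symm ▸ mem_univ (g x)
  exact ⟨g ⁻¹' a, mem_coverPre.2 ⟨a, ha, rfl⟩, hxa⟩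

lemma IsPartition.coverJoin {P Q : Finset (Set X)} (hP : IsPartition P) (hQ : IsPartition Q) :
    IsPartition (coverJoin P Q) := by
  refine ⟨hP.1.coverJoin hQ.1, ?_⟩
  rintro _ hA _ hB hAB
  obtain ⟨a, ha, b, hb, rfl⟩ := mem_coverJoin.1 hA
  obtain ⟨a', ha', b', hb', rfl⟩ := mem_coverJoin.1 hB
  by_cases haa' : a = a'
  · subst haa'
    have hbb' : b ≠ b' := fun h => hAB (by rw [h])
    exact (hQ.2 b hb b' hb' hbb').mono inter_subset_right inter_subset_right
  · exact (hP.2 a ha a' ha' haa').mono inter_subset_left inter_subset_left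

lemma IsPartition.coverPre (g : Y → X) {P : Finset (Set X)} (hP : IsPartition P) :
    IsPartition (coverPre g P) := by
  refine ⟨hP.1.coverPre g, ?_⟩
  rintro _ hA _ hB hAB
  obtain ⟨a, ha, rfl⟩ := mem_coverPre.1 hA
  obtain ⟨b, hb, rfl⟩ := mem_coverPre.1 hB
  exact (hP.2 a ha b hb fun h => hAB (by rw [h])).preimage g

variable [MeasurableSpace X] [MeasurableSpace Y]

lemma isBorelPartition_univ : IsBorelPartition ({univ} : Finset (Set X)) :=
  ⟨⟨by simp [IsCover], by simp⟩, by simp⟩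

lemma IsBorelPartition.coverJoin {P Q : Finset (Set X)} (hP : IsBorelPartition P)
    (hQ : IsBorelPartition Q) : IsBorelPartition (coverJoin P Q) := by
  refine ⟨hP.1.coverJoin hQ.1, fun _ hA => ?_⟩
  obtain ⟨a, ha, b, hb, rfl⟩ := mem_coverJoin.1 hA
  exact (hP.2 a ha).inter (hQ.2 b hb)

lemma IsBorelPartition.coverPre {g : Y → X} (hg : Measurable g) {P : Finset (Set X)}
    (hP : IsBorelPartition P) : IsBorelPartition (coverPre g P) := by
  refine ⟨hP.1.coverPre g, fun _ hA => ?_⟩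
  obtain ⟨a, ha, rfl⟩ := mem_coverPre.1 hA
  exact hg (hP.2 a ha)

lemma IsBorelPartition.dynJoin {T : X → X} (hT : Measurable T) {P : Finset (Set X)}
    (hP : IsBorelPartition P) (n : ℕ) : IsBorelPartition (dynJoin T P n) := by
  induction n with
  | zero => exact isBorelPartition_univ
  | succ n ih => exact ih.coverJoin (hP.coverPre (hT.iterate n))

lemma exists_isBorelPartition_refines {W : Finset (Set X)} (hW : IsCover W)
    (hWm : ∀ A ∈ W, MeasurableSet A) : ∃ R, IsBorelPartition R ∧ Refines R W := by
  classical
  let f : Fin W.card → Set X := fun i => W.equivFin.symm i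
  have hfW : ∀ i, f i ∈ W := fun i => (W.equivFin.symm i).2
  refine ⟨Finset.univ.image (disjointed f), ⟨⟨?_, ?_⟩, ?_⟩, ?_⟩
  · refine eq_univ_of_forall fun x => ?_
    obtain ⟨A, hA, hxA⟩ := hW.symm ▸ mem_univ x
    have hx : x ∈ ⋃ i, disjointed f i := by
      rw [iUnion_disjointed]
      exact mem_iUnion.2 ⟨W.equivFin ⟨A, hA⟩, by simpa [f] using hxA⟩
    obtain ⟨i, hxi⟩ := mem_iUnion.1 hx
    exact ⟨disjointed f i, by simp, hxi⟩
  · simp only [Finset.mem_image, Finset.mem_univ, true_and]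
    rintro _ ⟨i, rfl⟩ _ ⟨j, rfl⟩ hij
    exact disjoint_disjointed f fun h => hij (h ▸ rfl)
  · simp only [Finset.mem_image, Finset.mem_univ, true_and]
    rintro _ ⟨i, rfl⟩
    exact disjointedRec (fun _ j ht => ht.diff (hWm _ (hfW j))) (hWm _ (hfW i))
  · simp only [Refines, Finset.mem_image, Finset.mem_univ, true_and]
    rintro _ ⟨i, rfl⟩
    exact ⟨f i, hfW i, disjointed_subset f i⟩

end Partitions

section Entropy

open Real

/-- Scaled form of `negMulLog x ≤ 1 - x`; summed over a joint distribution it is Gibbs'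
inequality. -/
lemma negMulLog_le_neg_mul_log_add_sub {x y : ℝ} (hx : 0 ≤ x) (hy : 0 < y) :
    negMulLog x ≤ -x * log y + y - x := by
  calc negMulLog x = negMulLog (y * (x / y)) := by rw [mul_div_cancel₀ x hy.ne']
    _ = x / y * negMulLog y + y * negMulLog (x / y) := negMulLog_mul _ _
    _ ≤ x / y * negMulLog y + y * (1 - x / y) := by
      gcongr
      exact negMulLog_le_one_sub_self (div_nonneg hx hy.le)
    _ = -x * log y + y - x := by
      rw [negMulLog]
      field_simp
      ring

variable {X : Type*} [MeasurableSpace X] {μ : Measure X}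

lemma partEnt_eq_sum_negMulLog (R : Finset (Set X)) :
    partEnt μ R = ∑ A ∈ R, negMulLog (μ.real A) := by
  simp [partEnt, negMulLog, measureReal_def, Finset.sum_neg_distrib]

lemma partEnt_image [DecidableEq (Set X)] {ι : Type*} {s : Finset ι} {g : ι → Set X}
    (hg : (s : Set ι).PairwiseDisjoint g) :
    partEnt μ (s.image g) = ∑ i ∈ s, negMulLog (μ.real (g i)) := by
  rw [partEnt_eq_sum_negMulLog, Finset.sum_image_of_disjoint (by simp) hg]

lemma partEnt_coverJoin {P Q : Finset (Set X)} (hP : IsPartition P) (hQ : IsPartition Q) :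
    partEnt μ (coverJoin P Q) = ∑ p ∈ P ×ˢ Q, negMulLog (μ.real (p.1 ∩ p.2)) := by
  classical
  refine partEnt_image fun p hp q hq hpq => ?_
  rw [Finset.coe_product, mem_prod] at hp hq
  by_cases h1 : p.1 = q.1
  · exact (hQ.2 _ hp.2 _ hq.2 fun h2 => hpq (Prod.ext h1 h2)).mono inter_subset_right
      inter_subset_right
  · exact (hP.2 _ hp.1 _ hq.1 h1).mono inter_subset_left inter_subset_left

lemma partEnt_coverPre {Y : Type*} [MeasurableSpace Y] {ν : Measure Y} {g : Y → X}
    (hg : MeasurePreserving g ν μ) {P : Finset (Set X)} (hP : IsBorelPartition P) :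
    partEnt ν (coverPre g P) = partEnt μ P := by
  calc partEnt ν (coverPre g P) = ∑ A ∈ P, negMulLog (ν.real (g ⁻¹' A)) :=
        partEnt_image fun A hA B hB hAB => (hP.1.2 A hA B hB hAB).preimage g
    _ = ∑ A ∈ P, negMulLog (μ.real A) := Finset.sum_congr rfl fun A hA => by
        rw [hg.measureReal_preimage (hP.2 A hA).nullMeasurableSet]
    _ = partEnt μ P := (partEnt_eq_sum_negMulLog P).symm

lemma IsBorelPartition.sum_measureReal_inter [IsFiniteMeasure μ] {Q : Finset (Set X)}
    (hQ : IsBorelPartition Q) {s : Set X} (hs : MeasurableSet s) :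
    ∑ b ∈ Q, μ.real (s ∩ b) = μ.real s := by
  rw [← measureReal_biUnion_finset
    (fun a ha b hb hab => (hQ.1.2 a ha b hb hab).mono inter_subset_right inter_subset_right)
    fun b hb => hs.inter (hQ.2 b hb),
    ← inter_iUnion₂, hQ.1.1.biUnion_eq_univ, inter_univ]

variable [IsProbabilityMeasure μ]

lemma partEnt_nonneg (R : Finset (Set X)) : 0 ≤ partEnt μ R := by
  rw [partEnt_eq_sum_negMulLog]
  exact Finset.sum_nonneg fun _ _ => negMulLog_nonneg measureReal_nonneg measureReal_le_one

lemma IsBorelPartition.sum_measureReal {Q : Finset (Set X)} (hQ : IsBorelPartition Q) :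
    ∑ b ∈ Q, μ.real b = 1 := by
  simpa using hQ.sum_measureReal_inter (μ := μ) MeasurableSet.univ

lemma negMulLog_measureReal_inter_le {a b : Set X} :
    negMulLog (μ.real (a ∩ b)) ≤ -μ.real (a ∩ b) * log (μ.real a)
      - μ.real (a ∩ b) * log (μ.real b) + μ.real a * μ.real b - μ.real (a ∩ b) := by
  have hab := measureReal_nonneg (μ := μ) (s := a ∩ b)
  rcases (measureReal_nonneg (μ := μ) (s := a)).eq_or_lt with ha | ha
  · have : μ.real (a ∩ b) = 0 := le_antisymm (ha ▸ measureReal_mono inter_subset_left) hab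
    simp [this, ← ha]
  rcases (measureReal_nonneg (μ := μ) (s := b)).eq_or_lt with hb | hb
  · have : μ.real (a ∩ b) = 0 := le_antisymm (hb ▸ measureReal_mono inter_subset_right) hab
    simp [this, ← hb]
  have := negMulLog_le_neg_mul_log_add_sub hab (mul_pos ha hb)
  rw [log_mul ha.ne' hb.ne'] at this
  linarith

lemma partEnt_coverJoin_le {P Q : Finset (Set X)} (hP : IsBorelPartition P)
    (hQ : IsBorelPartition Q) : partEnt μ (coverJoin P Q) ≤ partEnt μ P + partEnt μ Q := by
  have hPQ := Finset.sum_le_sum fun (p : Set X × Set X) (_ : p ∈ P ×ˢ Q) =>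
    negMulLog_measureReal_inter_le (μ := μ) (a := p.1) (b := p.2)
  have hleft : ∑ p ∈ P ×ˢ Q, -μ.real (p.1 ∩ p.2) * log (μ.real p.1) = partEnt μ P := by
    rw [Finset.sum_product, partEnt_eq_sum_negMulLog]
    refine Finset.sum_congr rfl fun a ha => ?_
    simp only [neg_mul, Finset.sum_neg_distrib, ← Finset.sum_mul,
      hQ.sum_measureReal_inter (hP.2 a ha), negMulLog]
  have hright : ∑ p ∈ P ×ˢ Q, μ.real (p.1 ∩ p.2) * log (μ.real p.2) = -partEnt μ Q := by
    rw [Finset.sum_product_right, partEnt_eq_sum_negMulLog, ← Finset.sum_neg_distrib]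
    refine Finset.sum_congr rfl fun b hb => ?_
    simp only [inter_comm _ b, ← Finset.sum_mul, hP.sum_measureReal_inter (hQ.2 b hb), negMulLog,
      neg_mul, neg_neg]
  have hprod : ∑ p ∈ P ×ˢ Q, μ.real p.1 * μ.real p.2 = 1 := by
    simp only [Finset.sum_product, ← Finset.mul_sum, hQ.sum_measureReal, mul_one,
      hP.sum_measureReal]
  have hjoint : ∑ p ∈ P ×ˢ Q, μ.real (p.1 ∩ p.2) = 1 := by
    rw [Finset.sum_product, ← hP.sum_measureReal (μ := μ)]
    exact Finset.sum_congr rfl fun a ha => hQ.sum_measureReal_inter (hP.2 a ha)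
  simp only [Finset.sum_add_distrib, Finset.sum_sub_distrib] at hPQ
  rw [partEnt_coverJoin hP.1 hQ.1]
  linarith

end Entropy

section EntropyOfTransformation

variable {X : Type*} [MeasurableSpace X] {μ : Measure X} [IsProbabilityMeasure μ]

lemma subadditive_partEnt_dynJoin {T : X → X} (hT : MeasurePreserving T μ μ)
    {R : Finset (Set X)} (hR : IsBorelPartition R) :
    Subadditive fun n => partEnt μ (dynJoin T R n) := by
  intro m n
  dsimp only
  have hRn := hR.dynJoin hT.measurable n
  rw [dynJoin_add, ← partEnt_coverPre (hT.iterate m) hRn]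
  exact partEnt_coverJoin_le (hR.dynJoin hT.measurable m) (hRn.coverPre (hT.measurable.iterate m))

lemma bddBelow_range_partEnt_div (f : ℕ → Finset (Set X)) :
    BddBelow (range fun n : ℕ => partEnt μ (f n) / n) :=
  ⟨0, by rintro _ ⟨n, rfl⟩; exact div_nonneg (partEnt_nonneg _) n.cast_nonneg⟩

/-- Fekete's lemma identifies the infimum defining `hMuPart` with the limit. -/
lemma tendsto_partEnt_dynJoin_div {T : X → X} (hT : MeasurePreserving T μ μ)
    {R : Finset (Set X)} (hR : IsBorelPartition R) :
    Tendsto (fun n : ℕ => partEnt μ (dynJoin T R n) / n) atTop (𝓝 (hMuPart μ T R)) := by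
  have h := subadditive_partEnt_dynJoin hT hR
  convert h.tendsto_lim (bddBelow_range_partEnt_div _)
  rw [Subadditive.lim, sInf_image']
  rfl

lemma hMuPart_le_partEnt (S : X → X) (R : Finset (Set X)) : hMuPart μ S R ≤ partEnt μ R := by
  have hbdd : BddBelow (range fun m : {m : ℕ // 1 ≤ m} => partEnt μ (dynJoin S R m) / m) :=
    (bddBelow_range_partEnt_div (dynJoin S R)).mono (range_subset_iff.2 fun m => mem_range_self m.1)
  have h : hMuPart μ S R ≤ partEnt μ (dynJoin S R 1) / (1 : ℕ) := ciInf_le hbdd ⟨1, le_rfl⟩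
  rwa [dynJoin_one, Nat.cast_one, div_one] at h

lemma coverEnt_le_partEnt {W R : Finset (Set X)} (hR : IsBorelPartition R) (hRW : Refines R W) :
    coverEnt μ W ≤ partEnt μ R :=
  csInf_le ⟨0, by rintro _ ⟨R, -, -, rfl⟩; exact partEnt_nonneg R⟩ ⟨R, hR, hRW, rfl⟩

lemma bddBelow_hMuPart (S : X → X) (W : Finset (Set X)) :
    BddBelow {h | ∃ R, IsBorelPartition R ∧ Refines R W ∧ h = hMuPart μ S R} := by
  refine ⟨0, ?_⟩
  rintro _ ⟨R, -, -, rfl⟩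
  exact Real.iInf_nonneg fun m => div_nonneg (partEnt_nonneg _) m.1.cast_nonneg

lemma hMuPlus_le_coverEnt {W : Finset (Set X)} (hW : ∃ R, IsBorelPartition R ∧ Refines R W)
    (S : X → X) : hMuPlus μ S W ≤ coverEnt μ W := by
  obtain ⟨R₀, hR₀, hR₀W⟩ := hW
  refine le_csInf ⟨_, R₀, hR₀, hR₀W, rfl⟩ ?_
  rintro _ ⟨R, hR, hRW, rfl⟩
  exact (csInf_le (bddBelow_hMuPart S W) ⟨R, hR, hRW, rfl⟩).trans (hMuPart_le_partEnt S R)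

lemma le_hMuPlus_iterate_div {T : X → X} (hT : Measurable T) {U : Finset (Set X)} {n : ℕ}
    (hn : 0 < n) (hU : ∃ R, IsBorelPartition R ∧ Refines R (dynJoin T U n)) {c : ℝ}
    (hc : ∀ k ≥ n, c ≤ coverEnt μ (dynJoin T U k) / k) :
    c ≤ hMuPlus μ T^[n] (dynJoin T U n) / n := by
  obtain ⟨R₀, hR₀, hR₀U⟩ := hU
  rw [le_div_iff₀ (Nat.cast_pos.2 hn)]
  refine le_csInf ⟨_, R₀, hR₀, hR₀U, rfl⟩ ?_
  rintro _ ⟨R, hR, hRU, rfl⟩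
  refine le_ciInf fun ⟨m, hm⟩ => ?_
  have hcover : coverEnt μ (dynJoin T U (n * m)) ≤ partEnt μ (dynJoin T^[n] R m) := by
    refine coverEnt_le_partEnt (hR.dynJoin (hT.iterate n) m) ?_
    rw [← dynJoin_iterate_dynJoin]
    exact hRU.dynJoin _ m
  have hcnm := hc (n * m) (Nat.le_mul_of_pos_right n hm)
  rw [le_div_iff₀ (by positivity), Nat.cast_mul, ← mul_assoc] at hcnm
  rw [le_div_iff₀ (by positivity)]
  exact hcnm.trans hcover

lemma le_hMuPlus_of_tendsto {T : X → X} (hT : MeasurePreserving T μ μ) {U : Finset (Set X)}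
    (hU : ∃ R, IsBorelPartition R ∧ Refines R U) {L : ℝ}
    (hL : Tendsto (fun n : ℕ => coverEnt μ (dynJoin T U n) / n) atTop (𝓝 L)) :
    L ≤ hMuPlus μ T U := by
  obtain ⟨R₀, hR₀, hR₀U⟩ := hU
  refine le_csInf ⟨_, R₀, hR₀, hR₀U, rfl⟩ ?_
  rintro _ ⟨R, hR, hRU, rfl⟩
  refine le_of_tendsto_of_tendsto' hL (tendsto_partEnt_dynJoin_div hT hR) fun n => ?_
  exact div_le_div_of_nonneg_right
    (coverEnt_le_partEnt (hR.dynJoin hT.measurable n) (hRU.dynJoin T n)) n.cast_nonneg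

end EntropyOfTransformation

lemma tendsto_of_le_of_tail_lowerBound {a f : ℕ → ℝ} {L : ℝ} (ha : Tendsto a atTop (𝓝 L))
    (hup : ∀ n, f n ≤ a n) (hlow : ∀ n, 0 < n → ∀ c, (∀ k ≥ n, c ≤ a k) → c ≤ f n) :
    Tendsto f atTop (𝓝 L) := by
  refine tendsto_order.2 ⟨fun c hc => ?_, fun c hc => ?_⟩
  · obtain ⟨c', hcc', hc'L⟩ := exists_between hc
    obtain ⟨N, hN⟩ := eventually_atTop.1 (ha.eventually (lt_mem_nhds hc'L))
    filter_upwards [eventually_ge_atTop (max N 1)] with n hn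
    exact hcc'.trans_le (hlow n (by omega) c' fun k hk => (hN k (by omega)).le)
  · exact (ha.eventually (gt_mem_nhds hc)).mono fun n hn => (hup n).trans_lt hn

theorem stmt18_general {X : Type*} [MetricSpace X]
    [MeasurableSpace X] [BorelSpace X]
    (T : X ≃ₜ X)
    (μ : Measure X) [IsProbabilityMeasure μ]
    (hinv : ∀ A : Set X, MeasurableSet A → μ ((T : X → X) ⁻¹' A) = μ A)
    (U : Finset (Set X)) (hUc : IsCover U) (hUb : ∀ A ∈ U, MeasurableSet A)
    (L : ℝ)
    (hL : Tendsto (fun n : ℕ =>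
        coverEnt μ (dynJoin (T : X → X) U n) / n) atTop (nhds L)) :
    Tendsto (fun n : ℕ =>
        hMuPlus μ ((T : X → X)^[n]) (dynJoin (T : X → X) U n) / n) atTop (nhds L) ∧
    L ≤ hMuPlus μ (T : X → X) U := by
  have hTm : Measurable T := T.continuous.measurable
  have hT : MeasurePreserving T μ μ :=
    ⟨hTm, Measure.ext fun A hA => by rw [Measure.map_apply hTm hA, hinv A hA]⟩
  obtain ⟨R₀, hR₀, hR₀U⟩ := exists_isBorelPartition_refines hUc hUb
  have hU : ∀ n, ∃ R, IsBorelPartition R ∧ Refines R (dynJoin T U n) :=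
    fun n => ⟨_, hR₀.dynJoin hTm n, hR₀U.dynJoin T n⟩
  refine ⟨tendsto_of_le_of_tail_lowerBound hL (fun n => ?_)
    (fun n hn c hc => le_hMuPlus_iterate_div hTm hn (hU n) hc),
    le_hMuPlus_of_tendsto hT ⟨R₀, hR₀, hR₀U⟩ hL⟩
  exact div_le_div_of_nonneg_right (hMuPlus_le_coverEnt (hU n) _) n.cast_nonneg

theorem stmt18 {X : Type*} [MetricSpace X] [CompactSpace X]
    [MeasurableSpace X] [BorelSpace X]
    (T : X ≃ₜ X)
    (μ : Measure X) [IsProbabilityMeasure μ]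
    (hinv : ∀ A : Set X, MeasurableSet A → μ ((T : X → X) ⁻¹' A) = μ A)
    (U : Finset (Set X)) (hUc : IsCover U) (hUb : ∀ A ∈ U, MeasurableSet A)
    (L : ℝ)
    (hL : Tendsto (fun n : ℕ =>
        coverEnt μ (dynJoin (T : X → X) U n) / n) atTop (nhds L)) :
    Tendsto (fun n : ℕ =>
        hMuPlus μ ((T : X → X)^[n]) (dynJoin (T : X → X) U n) / n) atTop (nhds L) ∧
    L ≤ hMuPlus μ (T : X → X) U :=
  stmt18_general T μ hinv U hUc hUb L hL
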